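/- arXiv:2202.11416 — 4 statements merged into one kernel-verified Lean document; each statement's English description precedes it below -/
import Mathlib

section
/- Let T > 0, κ > 0, φ > 0 and A ≥ 0 with A < √(κφ). Set γ := √(φ/κ) and c := (√(κφ) + A)/(√(κφ) − A), and define θ₂ : [0,T] → ℝ by θ₂(t) = √(κφ)·(1 − c·e^{2γ(T−t)})/(1 + c·e^{2γ(T−t)}). Then θ₂ is differentiable on [0,T], satisfies the Riccati equation θ₂′(t) + (1/κ)·θ₂(t)² − φ = 0 for every t ∈ [0,T], and satisfies the terminal condition θ₂(T) = −A. -/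
/-!
For `c > 0`, `θ₂(t) = √(κφ) · tanh(γ (t - T) - (log c)/2)`, and `tanh' = 1 - tanh²` turns into the
Riccati equation because `γ √(κφ) = φ` and `γ / √(κφ) = 1/κ`. The constant `c` is the one for
which `tanh(-(log c)/2) = (1 - c)/(1 + c) = -A/√(κφ)`.
-/

open Real

section MobiusExp

variable (γ c T : ℝ)

theorem hasDerivAt_mobius_exp {t : ℝ} (hne : 1 + c * exp (2 * γ * (T - t)) ≠ 0) :
    HasDerivAt (fun x => (1 - c * exp (2 * γ * (T - x))) / (1 + c * exp (2 * γ * (T - x))))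
      (γ * (1 - ((1 - c * exp (2 * γ * (T - t))) / (1 + c * exp (2 * γ * (T - t)))) ^ 2)) t := by
  have hu : HasDerivAt (fun x => c * exp (2 * γ * (T - x)))
      (-(2 * γ) * (c * exp (2 * γ * (T - t)))) t := by
    have hlin : HasDerivAt (fun x => 2 * γ * (T - x)) (-(2 * γ)) t := by
      simpa using ((hasDerivAt_id t).const_sub T).const_mul (2 * γ)
    exact (hlin.exp.const_mul c).congr_deriv (by ring)
  refine ((hu.const_sub 1).div (hu.const_add 1) hne).congr_deriv ?_
  field_simp
  ring

theorem hasDerivAt_riccati_of_mobius_exp (s : ℝ) {t : ℝ}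
    (hne : 1 + c * exp (2 * γ * (T - t)) ≠ 0) :
    HasDerivAt (fun x => s * (1 - c * exp (2 * γ * (T - x))) / (1 + c * exp (2 * γ * (T - x))))
      (γ * s - γ / s *
        (s * (1 - c * exp (2 * γ * (T - t))) / (1 + c * exp (2 * γ * (T - t)))) ^ 2) t := by
  have h := (hasDerivAt_mobius_exp γ c T hne).const_mul s
  simp only [← mul_div_assoc] at h
  refine h.congr_deriv ?_
  rcases eq_or_ne s 0 with rfl | hs
  · simp
  · field_simp

end MobiusExp

theorem mul_mobius_div_sub_eq_neg (s A : ℝ) (hs : s ≠ 0) (hsA : s - A ≠ 0) :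
    s * (1 - (s + A) / (s - A)) / (1 + (s + A) / (s - A)) = -A := by
  have hsum : s - A + (s + A) ≠ 0 := by
    rw [show s - A + (s + A) = 2 * s by ring]
    exact mul_ne_zero two_ne_zero hs
  field_simp
  ring

theorem stmt_0_general (T κ φ A : ℝ) (hκ : 0 < κ) (hφ : 0 < φ)
    (hA : 0 ≤ A) (hA' : A < Real.sqrt (κ * φ))
    (γ c : ℝ) (hγ : γ = Real.sqrt (φ / κ))
    (hc : c = (Real.sqrt (κ * φ) + A) / (Real.sqrt (κ * φ) - A))
    (θ₂ : ℝ → ℝ)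
    (hθ₂ : ∀ t, θ₂ t = Real.sqrt (κ * φ) * (1 - c * Real.exp (2 * γ * (T - t))) /
      (1 + c * Real.exp (2 * γ * (T - t)))) :
    (∀ t ∈ Set.Icc (0:ℝ) T, HasDerivWithinAt θ₂ (φ - (1 / κ) * (θ₂ t) ^ 2) (Set.Icc (0:ℝ) T) t)
      ∧ θ₂ T = -A := by
  set s := √(κ * φ)
  have hs : 0 < s := hA.trans_lt hA'
  have hs_eq : s = κ * γ := by
    calc s = √(κ ^ 2 * (φ / κ)) := by rw [sq, mul_assoc, mul_div_cancel₀ φ hκ.ne']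
      _ = κ * γ := by rw [sqrt_mul (sq_nonneg κ), sqrt_sq hκ.le, hγ]
  have hγs : γ * s = φ := by
    rw [hs_eq, mul_left_comm, ← sq, hγ, sq_sqrt (div_nonneg hφ.le hκ.le), mul_div_cancel₀ φ hκ.ne']
  have hγ_div : γ / s = 1 / κ := by
    rw [hs_eq, div_mul_cancel_right₀ (by rw [hγ]; positivity) κ, one_div]
  have hc_pos : 0 < c := hc ▸ div_pos (by linarith) (sub_pos.mpr hA')
  have hθ₂_eq : θ₂ = fun x => s * (1 - c * exp (2 * γ * (T - x))) /
      (1 + c * exp (2 * γ * (T - x))) := funext hθ₂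
  refine ⟨fun t _ => ?_, ?_⟩
  · have hderiv := hasDerivAt_riccati_of_mobius_exp γ c T s (t := t) (by positivity)
    rw [hγs, hγ_div, ← hθ₂ t, ← hθ₂_eq] at hderiv
    exact hderiv.hasDerivWithinAt
  · rw [hθ₂ T, sub_self, mul_zero, exp_zero, mul_one, hc]
    exact mul_mobius_div_sub_eq_neg s A hs.ne' (sub_pos.mpr hA').ne'

/-- The explicit function θ₂ solves the Riccati equation
θ₂′(t) + (1/κ)·θ₂(t)² − φ = 0 on [0,T] with terminal condition θ₂(T) = −A. -/
theorem stmt_0 (T κ φ A : ℝ) (hT : 0 < T) (hκ : 0 < κ) (hφ : 0 < φ)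
    (hA : 0 ≤ A) (hA' : A < Real.sqrt (κ * φ))
    (γ c : ℝ) (hγ : γ = Real.sqrt (φ / κ))
    (hc : c = (Real.sqrt (κ * φ) + A) / (Real.sqrt (κ * φ) - A))
    (θ₂ : ℝ → ℝ)
    (hθ₂ : ∀ t, θ₂ t = Real.sqrt (κ * φ) * (1 - c * Real.exp (2 * γ * (T - t))) /
      (1 + c * Real.exp (2 * γ * (T - t)))) :
    (∀ t ∈ Set.Icc (0:ℝ) T, HasDerivWithinAt θ₂ (φ - (1 / κ) * (θ₂ t) ^ 2) (Set.Icc (0:ℝ) T) t)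
      ∧ θ₂ T = -A :=
  stmt_0_general T κ φ A hκ hφ hA hA' γ c hγ hc θ₂ hθ₂
end

section
/- Let T > 0, κ ≠ 0, let p : [0,T] → ℝ be continuous and let θ₂ : [0,T] → ℝ be continuous. Define θ₁ : [0,T] → ℝ by θ₁(t) = p(T)·e^{(1/κ)∫ₜ^T θ₂(s)ds} − (1/κ)∫ₜ^T θ₂(s)·p(s)·e^{(1/κ)∫ₜ^s θ₂(τ)dτ} ds. Then θ₁ is differentiable on [0,T], satisfies the linear ODE θ₁′(t) + (1/κ)·θ₂(t)·(θ₁(t) − p(t)) = 0 for every t ∈ [0,T], and satisfies the terminal condition θ₁(T) = p(T). -/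
open Set intervalIntegral

/-- FTC: derivative of a primitive within `Icc 0 T`. -/
lemma helper_primitive {f : ℝ → ℝ} {T : ℝ} (hT : 0 < T)
    (hf : ContinuousOn f (Set.Icc (0:ℝ) T)) {a : ℝ} (ha : a ∈ Set.Icc (0:ℝ) T)
    {t : ℝ} (ht : t ∈ Set.Icc (0:ℝ) T) :
    HasDerivWithinAt (fun u => ∫ x in a..u, f x) (f t) (Set.Icc (0:ℝ) T) t := by
  have hint : IntervalIntegrable f MeasureTheory.volume a t :=
    (hf.mono (Set.uIcc_subset_Icc ha ht)).intervalIntegrable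
  rcases eq_or_lt_of_le ht.1 with h0 | h0
  · -- t = 0
    subst h0
    have hmem : Set.Icc (0:ℝ) T ∈ nhdsWithin (0:ℝ) (Set.Ioi 0) := by
      refine mem_nhdsWithin.2 ⟨Set.Iio T, isOpen_Iio, hT, ?_⟩
      rintro x ⟨hx1, hx2⟩
      exact ⟨le_of_lt hx2, le_of_lt hx1⟩
    have hmeas : StronglyMeasurableAtFilter f (nhdsWithin (0:ℝ) (Set.Ioi 0)) :=
      ⟨Set.Icc 0 T, hmem, hf.aestronglyMeasurable measurableSet_Icc⟩
    have hc : ContinuousWithinAt f (Set.Ioi (0:ℝ)) 0 :=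
      (hf 0 ht).mono_of_mem_nhdsWithin hmem
    exact (integral_hasDerivWithinAt_right hint hmeas hc).mono Set.Icc_subset_Ici_self
  rcases eq_or_lt_of_le ht.2 with hTt | hTt
  · -- t = T
    have hmem : Set.Icc (0:ℝ) T ∈ nhdsWithin t (Set.Iic t) := by
      refine mem_nhdsWithin.2 ⟨Set.Ioi 0, isOpen_Ioi, h0, ?_⟩
      rintro x ⟨hx1, hx2⟩
      exact ⟨le_of_lt hx1, le_trans hx2 ht.2⟩
    have hmeas : StronglyMeasurableAtFilter f (nhdsWithin t (Set.Iic t)) :=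
      ⟨Set.Icc 0 T, hmem, hf.aestronglyMeasurable measurableSet_Icc⟩
    have hc : ContinuousWithinAt f (Set.Iic t) t :=
      (hf t ht).mono_of_mem_nhdsWithin hmem
    have := (integral_hasDerivWithinAt_right hint hmeas hc).mono
      (show Set.Icc (0:ℝ) T ⊆ Set.Iic t by rw [hTt]; exact Set.Icc_subset_Iic_self)
    exact this
  · -- interior
    have hmem : Set.Icc (0:ℝ) T ∈ nhds t := Icc_mem_nhds h0 hTt
    have hmeas : StronglyMeasurableAtFilter f (nhds t) :=
      ⟨Set.Icc 0 T, hmem, hf.aestronglyMeasurable measurableSet_Icc⟩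
    have hc : ContinuousAt f t := (hf t ht).continuousAt hmem
    exact (integral_hasDerivAt_right hint hmeas hc).hasDerivWithinAt

/-- The explicit variation-of-constants formula for θ₁ solves the
linear ODE θ₁′(t) + (1/κ)·θ₂(t)·(θ₁(t) − p(t)) = 0 on [0,T] with θ₁(T) = p(T). -/
theorem stmt_2 (T κ : ℝ) (hT : 0 < T) (hκ : κ ≠ 0)
    (p θ₂ : ℝ → ℝ)
    (hp : ContinuousOn p (Set.Icc (0:ℝ) T))
    (hθ₂ : ContinuousOn θ₂ (Set.Icc (0:ℝ) T))
    (θ₁ : ℝ → ℝ)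
    (hθ₁ : ∀ t, θ₁ t =
      p T * Real.exp ((1 / κ) * ∫ s in t..T, θ₂ s) -
      (1 / κ) * ∫ s in t..T, θ₂ s * p s * Real.exp ((1 / κ) * ∫ τ in t..s, θ₂ τ)) :
    (∀ t ∈ Set.Icc (0:ℝ) T,
      HasDerivWithinAt θ₁ (-(1 / κ) * θ₂ t * (θ₁ t - p t)) (Set.Icc (0:ℝ) T) t)
      ∧ θ₁ T = p T := by
  have hT0 : (0:ℝ) ∈ Set.Icc (0:ℝ) T := ⟨le_refl _, hT.le⟩
  have hTT : T ∈ Set.Icc (0:ℝ) T := ⟨hT.le, le_refl _⟩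
  set F : ℝ → ℝ := fun u => ∫ x in (0:ℝ)..u, θ₂ x with hF_def
  set g : ℝ → ℝ := fun s => θ₂ s * p s * Real.exp ((1/κ) * F s) with hg_def
  -- integrability of θ₂ between points of Icc
  have hθ₂int : ∀ a ∈ Set.Icc (0:ℝ) T, ∀ b ∈ Set.Icc (0:ℝ) T,
      IntervalIntegrable θ₂ MeasureTheory.volume a b := fun a ha b hb =>
    (hθ₂.mono (Set.uIcc_subset_Icc ha hb)).intervalIntegrable
  -- splitting lemma
  have hsplit : ∀ a ∈ Set.Icc (0:ℝ) T, ∀ b ∈ Set.Icc (0:ℝ) T,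
      (∫ x in a..b, θ₂ x) = F b - F a := by
    intro a ha b hb
    have := integral_add_adjacent_intervals (hθ₂int 0 hT0 a ha) (hθ₂int a ha b hb)
    simp only [hF_def]
    linarith [this]
  -- continuity of F on Icc
  have hFcont : ContinuousOn F (Set.Icc (0:ℝ) T) := by
    intro x hx
    exact (helper_primitive hT hθ₂ hT0 hx).continuousWithinAt
  have hgcont : ContinuousOn g (Set.Icc (0:ℝ) T) := by
    refine (hθ₂.mul hp).mul (Real.continuous_exp.comp_continuousOn ?_)
    exact hFcont.const_smul (1/κ)
  have hgint : ∀ a ∈ Set.Icc (0:ℝ) T, ∀ b ∈ Set.Icc (0:ℝ) T,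
      IntervalIntegrable g MeasureTheory.volume a b := fun a ha b hb =>
    (hgcont.mono (Set.uIcc_subset_Icc ha hb)).intervalIntegrable
  set G : ℝ → ℝ := fun u => p T * Real.exp ((1/κ) * F T) -
    (1/κ) * ∫ s in u..T, g s with hG_def
  -- key identity on Icc
  have hkey : ∀ t ∈ Set.Icc (0:ℝ) T, θ₁ t = Real.exp (-((1/κ) * F t)) * G t := by
    intro t ht
    rw [hθ₁ t]
    have h1 : (∫ s in t..T, θ₂ s) = F T - F t := hsplit t ht T hTT
    have h2 : (∫ s in t..T, θ₂ s * p s * Real.exp ((1 / κ) * ∫ τ in t..s, θ₂ τ))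
        = Real.exp (-((1/κ) * F t)) * ∫ s in t..T, g s := by
      rw [← integral_const_mul]
      refine integral_congr ?_
      intro s hs
      have hs' : s ∈ Set.Icc (0:ℝ) T := by
        rw [Set.uIcc_of_le ht.2] at hs
        exact ⟨le_trans ht.1 hs.1, hs.2⟩
      show θ₂ s * p s * Real.exp (1 / κ * ∫ τ in t..s, θ₂ τ) =
        Real.exp (-(1 / κ * F t)) * (θ₂ s * p s * Real.exp (1 / κ * F s))
      rw [hsplit t ht s hs', mul_sub, Real.exp_sub, Real.exp_neg]
      ring
    rw [h1, h2]
    show p T * Real.exp (1 / κ * (F T - F t)) -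
        1 / κ * (Real.exp (-(1 / κ * F t)) * ∫ s in t..T, g s) =
      Real.exp (-(1 / κ * F t)) *
        (p T * Real.exp (1 / κ * F T) - 1 / κ * ∫ s in t..T, g s)
    rw [mul_sub, Real.exp_sub, Real.exp_neg]
    ring
  constructor
  · intro t ht
    have hF' : HasDerivWithinAt F (θ₂ t) (Set.Icc (0:ℝ) T) t :=
      helper_primitive hT hθ₂ hT0 ht
    have hE : HasDerivWithinAt (fun u => Real.exp (-((1/κ) * F u)))
        (Real.exp (-((1/κ) * F t)) * (-((1/κ) * θ₂ t))) (Set.Icc (0:ℝ) T) t :=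
      ((hF'.const_mul (1/κ)).neg).exp
    have hI : HasDerivWithinAt (fun u => ∫ s in u..T, g s) (-(g t))
        (Set.Icc (0:ℝ) T) t := by
      have h1 : HasDerivWithinAt (fun u => ∫ s in T..u, g s) (g t)
          (Set.Icc (0:ℝ) T) t := helper_primitive hT hgcont hTT ht
      have := h1.neg
      refine this.congr (fun y _ => ?_) ?_
      · exact integral_symm T y
      · exact integral_symm T t
    have hG' : HasDerivWithinAt G (-((1/κ) * -(g t))) (Set.Icc (0:ℝ) T) t :=
      (hI.const_mul (1/κ)).const_sub _
    have hprod := hE.mul hG'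
    refine (hprod.congr (fun y hy => hkey y hy) (hkey t ht)).congr_deriv ?_
    -- derivative value equality
    rw [hkey t ht, hg_def]
    simp only
    rw [Real.exp_neg]
    have h := Real.exp_ne_zero ((1/κ) * F t)
    field_simp
    ring
  · rw [hθ₁ T]
    simp
end

section
/- Let T > 0, κ ≠ 0 and φ ∈ ℝ, and let p₀, E₀, Λ₀ ∈ ℝ. Suppose Π, E : [0,T] → ℝ are differentiable and Λ : [0,T] → ℝ is continuous, with Π′(t) = 2φ·E(t), E′(t) = −Λ(t), E(0) = E₀, Λ(0) = Λ₀, and Π(t) + 2κ·Λ(t) = p₀ for all t ∈ [0,T] (i.e., the formed price is constantly equal to p₀). Then Λ is twice differentiable on [0,T] and satisfies κ·Λ″(t) = φ·Λ(t) for every t ∈ [0,T], with initial conditions Λ(0) = Λ₀ and Λ′(0) = −φ·E₀/κ. -/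
/-! Solving the price constraint for Λ = (p₀ - Π) / (2κ) gives Λ' = -φE/κ, and differentiating
once more with E' = -Λ gives κΛ'' = φΛ. -/

theorem HasDerivWithinAt.of_add_mul_eq_const {𝕜 : Type*} [NontriviallyNormedField 𝕜]
    {f g : 𝕜 → 𝕜} {s : Set 𝕜} {c p f' x : 𝕜} (hc : c ≠ 0) (hf : HasDerivWithinAt f f' s x)
    (hx : x ∈ s) (h : ∀ y ∈ s, f y + c * g y = p) :
    HasDerivWithinAt g (-f' / c) s x := by
  have hg : ∀ y ∈ s, g y = (p - f y) / c := fun y hy => by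
    rw [← h y hy]; field_simp; ring
  exact ((hf.const_sub p).div_const c).congr_of_mem hg hx

theorem stmt_6_general (T κ φ p₀ E₀ Λ₀ : ℝ) (hκ : κ ≠ 0)
    (Pi E Λ : ℝ → ℝ)
    (hPi : ∀ t ∈ Set.Icc (0:ℝ) T, HasDerivWithinAt Pi (2 * φ * E t) (Set.Icc (0:ℝ) T) t)
    (hE : ∀ t ∈ Set.Icc (0:ℝ) T, HasDerivWithinAt E (-Λ t) (Set.Icc (0:ℝ) T) t)
    (hE0 : E 0 = E₀) (hΛ0 : Λ 0 = Λ₀)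
    (hconst : ∀ t ∈ Set.Icc (0:ℝ) T, Pi t + 2 * κ * Λ t = p₀) :
    ∃ Λ' Λ'' : ℝ → ℝ,
      (∀ t ∈ Set.Icc (0:ℝ) T, HasDerivWithinAt Λ (Λ' t) (Set.Icc (0:ℝ) T) t) ∧
      (∀ t ∈ Set.Icc (0:ℝ) T, HasDerivWithinAt Λ' (Λ'' t) (Set.Icc (0:ℝ) T) t) ∧
      (∀ t ∈ Set.Icc (0:ℝ) T, κ * Λ'' t = φ * Λ t) ∧
      Λ 0 = Λ₀ ∧ Λ' 0 = -(φ * E₀) / κ := by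
  refine ⟨fun t => -(φ * E t) / κ, fun t => φ * Λ t / κ, fun t ht => ?_, fun t ht => ?_,
    fun t _ => by field_simp, hΛ0, by simp only [hE0]⟩
  · have hΛ := (hPi t ht).of_add_mul_eq_const (mul_ne_zero two_ne_zero hκ) ht hconst
    exact hΛ.congr_deriv (by ring_nf)
  · exact (((hE t ht).const_mul φ).neg.div_const κ).congr_deriv (by ring)

/-- If the formed price is constant, Π + 2κΛ ≡ p₀, with Π′ = 2φE and
E′ = −Λ, then Λ is twice differentiable with κΛ″ = φΛ, Λ(0) = Λ₀ and
Λ′(0) = −φE₀/κ. (Here `Pi` plays the role of Π.) -/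
theorem stmt_6 (T κ φ p₀ E₀ Λ₀ : ℝ) (hT : 0 < T) (hκ : κ ≠ 0)
    (Pi E Λ : ℝ → ℝ)
    (hPi : ∀ t ∈ Set.Icc (0:ℝ) T, HasDerivWithinAt Pi (2 * φ * E t) (Set.Icc (0:ℝ) T) t)
    (hE : ∀ t ∈ Set.Icc (0:ℝ) T, HasDerivWithinAt E (-Λ t) (Set.Icc (0:ℝ) T) t)
    (hΛcont : ContinuousOn Λ (Set.Icc (0:ℝ) T))
    (hE0 : E 0 = E₀) (hΛ0 : Λ 0 = Λ₀)
    (hconst : ∀ t ∈ Set.Icc (0:ℝ) T, Pi t + 2 * κ * Λ t = p₀) :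
    ∃ Λ' Λ'' : ℝ → ℝ,
      (∀ t ∈ Set.Icc (0:ℝ) T, HasDerivWithinAt Λ (Λ' t) (Set.Icc (0:ℝ) T) t) ∧
      (∀ t ∈ Set.Icc (0:ℝ) T, HasDerivWithinAt Λ' (Λ'' t) (Set.Icc (0:ℝ) T) t) ∧
      (∀ t ∈ Set.Icc (0:ℝ) T, κ * Λ'' t = φ * Λ t) ∧
      Λ 0 = Λ₀ ∧ Λ' 0 = -(φ * E₀) / κ :=
  stmt_6_general T κ φ p₀ E₀ Λ₀ hκ Pi E Λ hPi hE hE0 hΛ0 hconst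
end

section
/- Let T > 0, κ > 0, φ > 0 and Λ₀, E₀ ∈ ℝ with Λ₀·√κ − √φ·E₀ ≠ 0. Set γ := √(φ/κ) and β := (Λ₀·√κ + √φ·E₀)/(Λ₀·√κ − √φ·E₀), and assume β·e^{2γu} + 1 ≠ 0 for every u ∈ [0,T]. Define g(u) := γ·(β·e^{2γu} − 1)/(β·e^{2γu} + 1) and Λ(t) := Λ₀·e^{∫₀ᵗ g(u)du} for t ∈ [0,T]. Then Λ is twice differentiable on [0,T] and satisfies κ·Λ″(t) = φ·Λ(t) for every t ∈ [0,T], with Λ(0) = Λ₀ and Λ′(0) = φ·E₀/κ. -/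
/-! `g` is `γ tanh (γ u + c)` with `β = e^{2c}`, so it solves the Riccati equation `g' = γ² - g²`.
Since `Λ' = Λ g`, this gives `Λ'' = Λ g² + Λ (γ² - g²) = γ² Λ = (φ / κ) Λ`, and `β` is chosen so that
`Λ₀ g(0) = φ E₀ / κ`. -/

open Real Set

noncomputable def riccatiSol (γ β u : ℝ) : ℝ :=
  γ * (β * exp (2 * γ * u) - 1) / (β * exp (2 * γ * u) + 1)

theorem hasDerivAt_riccatiSol {γ β t : ℝ} (ht : β * exp (2 * γ * t) + 1 ≠ 0) :
    HasDerivAt (riccatiSol γ β) (γ ^ 2 - riccatiSol γ β t ^ 2) t := by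
  have hexp : HasDerivAt (fun u => β * exp (2 * γ * u)) (2 * γ * (β * exp (2 * γ * t))) t :=
    ((((hasDerivAt_id t).const_mul (2 * γ)).exp).const_mul β).congr_deriv
      (by simp only [id, mul_one]; ring)
  refine (((hexp.sub_const 1).const_mul γ).div (hexp.add_const 1) ht).congr_deriv ?_
  rw [riccatiSol]
  generalize β * exp (2 * γ * t) = B at ht ⊢
  field_simp
  ring

theorem hasDerivWithinAt_const_mul_exp_integral {g : ℝ → ℝ} {a b t : ℝ} (c : ℝ)
    (hg : ContinuousOn g (Icc a b)) (ht : t ∈ Icc a b) :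
    HasDerivWithinAt (fun t => c * exp (∫ u in a..t, g u))
      (c * exp (∫ u in a..t, g u) * g t) (Icc a b) t := by
  have : Fact (t ∈ Icc a b) := ⟨ht⟩
  have hint : IntervalIntegrable g MeasureTheory.volume a t :=
    (hg.mono (by rw [uIcc_of_le ht.1]; exact Icc_subset_Icc_right ht.2)).intervalIntegrable
  have hF : HasDerivWithinAt (fun t => ∫ u in a..t, g u) (g t) (Icc a b) t :=
    intervalIntegral.integral_hasDerivWithinAt_right hint
      ⟨Icc a b, self_mem_nhdsWithin, hg.aestronglyMeasurable measurableSet_Icc⟩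
      (hg.continuousWithinAt ht)
  exact (hF.exp.const_mul c).congr_deriv (by ring)

theorem HasDerivWithinAt.mul_of_riccati {Λ g : ℝ → ℝ} {s : Set ℝ} {t c : ℝ}
    (hΛ : HasDerivWithinAt Λ (Λ t * g t) s t) (hg : HasDerivWithinAt g (c - g t ^ 2) s t) :
    HasDerivWithinAt (fun u => Λ u * g u) (c * Λ t) s t :=
  (hΛ.mul hg).congr_deriv (by ring)

theorem mul_sub_one_div_add_one_of_eq_div {a b β : ℝ} (hab : a - b ≠ 0)
    (hβ : β = (a + b) / (a - b)) (hβ1 : β + 1 ≠ 0) :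
    a * ((β - 1) / (β + 1)) = b := by
  have hcross : a * (β - 1) = b * (β + 1) := by
    rw [hβ]; field_simp; ring
  rw [← mul_div_assoc, hcross, mul_div_cancel_right₀ _ hβ1]

/-- The closed-form order flow Λ(t) = Λ₀·e^{∫₀ᵗ g(u)du}, with
g(u) = γ(βe^{2γu} − 1)/(βe^{2γu} + 1), solves κΛ″ = φΛ on [0,T] with
Λ(0) = Λ₀ and Λ′(0) = φE₀/κ. -/
theorem stmt_7 (T κ φ Λ₀ E₀ : ℝ) (hT : 0 < T) (hκ : 0 < κ) (hφ : 0 < φ)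
    (hne : Λ₀ * Real.sqrt κ - Real.sqrt φ * E₀ ≠ 0)
    (γ β : ℝ) (hγ : γ = Real.sqrt (φ / κ))
    (hβ : β = (Λ₀ * Real.sqrt κ + Real.sqrt φ * E₀) / (Λ₀ * Real.sqrt κ - Real.sqrt φ * E₀))
    (hden : ∀ u ∈ Set.Icc (0:ℝ) T, β * Real.exp (2 * γ * u) + 1 ≠ 0)
    (g Λ : ℝ → ℝ)
    (hg : ∀ u, g u = γ * (β * Real.exp (2 * γ * u) - 1) / (β * Real.exp (2 * γ * u) + 1))
    (hΛ : ∀ t, Λ t = Λ₀ * Real.exp (∫ u in (0:ℝ)..t, g u)) :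
    ∃ Λ' Λ'' : ℝ → ℝ,
      (∀ t ∈ Set.Icc (0:ℝ) T, HasDerivWithinAt Λ (Λ' t) (Set.Icc (0:ℝ) T) t) ∧
      (∀ t ∈ Set.Icc (0:ℝ) T, HasDerivWithinAt Λ' (Λ'' t) (Set.Icc (0:ℝ) T) t) ∧
      (∀ t ∈ Set.Icc (0:ℝ) T, κ * Λ'' t = φ * Λ t) ∧
      Λ 0 = Λ₀ ∧ Λ' 0 = φ * E₀ / κ := by
  obtain rfl : g = riccatiSol γ β := funext hg
  obtain rfl : Λ = fun t => Λ₀ * exp (∫ u in (0:ℝ)..t, riccatiSol γ β u) := funext hΛ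
  have hg' (t) (ht : t ∈ Icc (0:ℝ) T) :
      HasDerivAt (riccatiSol γ β) (γ ^ 2 - riccatiSol γ β t ^ 2) t :=
    hasDerivAt_riccatiSol (hden t ht)
  have hΛ' (t) (ht : t ∈ Icc (0:ℝ) T) := hasDerivWithinAt_const_mul_exp_integral Λ₀
    (fun t ht => (hg' t ht).continuousAt.continuousWithinAt) ht
  refine ⟨_, fun t => γ ^ 2 * (Λ₀ * exp (∫ u in (0:ℝ)..t, riccatiSol γ β u)), hΛ',
    fun t ht => (hΛ' t ht).mul_of_riccati (hg' t ht).hasDerivWithinAt, fun t _ => ?_, by simp, ?_⟩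
  · rw [hγ, sq_sqrt (div_nonneg hφ.le hκ.le)]
    field_simp
  · have hslope : Λ₀ * √κ * ((β - 1) / (β + 1)) = √φ * E₀ :=
      mul_sub_one_div_add_one_of_eq_div hne hβ (by simpa using hden 0 ⟨le_rfl, hT.le⟩)
    simp only [intervalIntegral.integral_same, exp_zero, mul_one, riccatiSol, mul_zero]
    calc Λ₀ * (γ * (β - 1) / (β + 1)) = √φ / √κ ^ 2 * (Λ₀ * √κ * ((β - 1) / (β + 1))) := by
          rw [hγ, sqrt_div hφ.le]; field_simp
      _ = φ * E₀ / κ := by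
          rw [hslope, sq_sqrt hκ.le, ← mul_assoc, div_mul_eq_mul_div, mul_self_sqrt hφ.le]; ring
end
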